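/- Under the hypotheses of the previous statement, the error of the inexact iteration satisfies ||x - x^{(n)}_in||_A ≤ ||x - x^{(n)}_ex||_A + ε ||S||_{A₀,A} / (1 - ||E||_A) ≤ ||E||_A^n ||x - x^{(0)}||_A + ε ||S||_{A₀,A} / (1 - ||E||_A). -/

import Mathlib

open Matrix

/-- Euclidean norm of a vector. -/
noncomputable def eucl {n : ℕ} (v : Fin n → ℝ) : ℝ := Real.sqrt (v ⬝ᵥ v)

/-- Energy norm induced by a matrix `A`: `‖v‖_A = (vᵀ A v)^{1/2}`. -/
noncomputable def enrg {n : ℕ} (A : Matrix (Fin n) (Fin n) ℝ) (v : Fin n → ℝ) : ℝ :=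
  Real.sqrt (v ⬝ᵥ (A *ᵥ v))

/-- Operator norm of `S` from `(ℝ^n, ‖·‖_B)` to `(ℝ^m, ‖·‖_A)`. -/
noncomputable def opN {m n : ℕ} (A : Matrix (Fin m) (Fin m) ℝ)
    (B : Matrix (Fin n) (Fin n) ℝ) (S : Matrix (Fin m) (Fin n) ℝ) : ℝ :=
  sSup {c : ℝ | ∃ v : Fin n → ℝ, v ≠ 0 ∧ c = enrg A (S *ᵥ v) / enrg B v}

/-- Spectral (Euclidean operator) norm of a matrix. -/
noncomputable def spN {m n : ℕ} (M : Matrix (Fin m) (Fin n) ℝ) : ℝ :=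
  sSup {c : ℝ | ∃ v : Fin n → ℝ, v ≠ 0 ∧ c = eucl (M *ᵥ v) / eucl v}


section AuxLemmas

open scoped MatrixOrder

lemma eucl_eq_norm {n : ℕ} (v : Fin n → ℝ) :
    eucl v = ‖(WithLp.equiv 2 (Fin n → ℝ)).symm v‖ := by
  rw [eucl, EuclideanSpace.norm_eq]
  congr 1
  simp [dotProduct, Real.norm_eq_abs, sq_abs, sq]

lemma eucl_nonneg {n : ℕ} (v : Fin n → ℝ) : 0 ≤ eucl v := Real.sqrt_nonneg _

lemma eucl_zero {n : ℕ} : eucl (0 : Fin n → ℝ) = 0 := by simp [eucl]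

lemma eucl_add_le {n : ℕ} (u v : Fin n → ℝ) : eucl (u + v) ≤ eucl u + eucl v := by
  simp only [eucl_eq_norm]
  rw [show (WithLp.equiv 2 (Fin n → ℝ)).symm (u + v)
      = (WithLp.equiv 2 (Fin n → ℝ)).symm u + (WithLp.equiv 2 (Fin n → ℝ)).symm v from rfl]
  exact norm_add_le _ _

lemma eucl_sum_le {n : ℕ} {ι : Type*} (s : Finset ι) (f : ι → Fin n → ℝ) :
    eucl (∑ i ∈ s, f i) ≤ ∑ i ∈ s, eucl (f i) := by
  classical
  induction s using Finset.induction with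
  | empty => simp [eucl_zero]
  | insert _ _ h ih =>
    rw [Finset.sum_insert h, Finset.sum_insert h]
    exact (eucl_add_le _ _).trans (by linarith [ih])

lemma exists_lin_bound {m n : ℕ} (f : (Fin n → ℝ) →ₗ[ℝ] (Fin m → ℝ)) :
    ∃ C : ℝ, 0 ≤ C ∧ ∀ v, eucl (f v) ≤ C * eucl v := by
  let e1 := WithLp.linearEquiv 2 ℝ (Fin n → ℝ)
  let e2 := WithLp.linearEquiv 2 ℝ (Fin m → ℝ)
  let g : EuclideanSpace ℝ (Fin n) →ₗ[ℝ] EuclideanSpace ℝ (Fin m) :=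
    e2.symm.toLinearMap ∘ₗ f ∘ₗ e1.toLinearMap
  let G := LinearMap.toContinuousLinearMap g
  refine ⟨‖G‖, norm_nonneg _, fun v => ?_⟩
  have h := G.le_opNorm ((WithLp.equiv 2 (Fin n → ℝ)).symm v)
  simpa [eucl_eq_norm, G, g, e1, e2] using h

lemma enrg_eq_eucl {n : ℕ} {A : Matrix (Fin n) (Fin n) ℝ} (hA : A.PosDef) (v : Fin n → ℝ) :
    enrg A v = eucl (CFC.sqrt A *ᵥ v) := by
  have hs : CFC.sqrt A * CFC.sqrt A = A := CFC.sqrt_mul_sqrt_self A hA.posSemidef.nonneg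
  have hherm : (CFC.sqrt A)ᵀ = CFC.sqrt A := by
    have := (CFC.sqrt_nonneg A).posSemidef.1
    simpa [Matrix.IsHermitian, Matrix.conjTranspose_eq_transpose_of_trivial] using this
  have key : v ⬝ᵥ (A *ᵥ v) = (CFC.sqrt A *ᵥ v) ⬝ᵥ (CFC.sqrt A *ᵥ v) := by
    conv_lhs => rw [← hs]
    rw [← mulVec_mulVec, dotProduct_mulVec, ← mulVec_transpose, hherm]
  rw [enrg, eucl, key]

lemma enrg_nonneg {n : ℕ} (A : Matrix (Fin n) (Fin n) ℝ) (v : Fin n → ℝ) : 0 ≤ enrg A v :=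
  Real.sqrt_nonneg _

lemma enrg_zero {n : ℕ} (A : Matrix (Fin n) (Fin n) ℝ) : enrg A (0 : Fin n → ℝ) = 0 := by
  simp [enrg]

lemma enrg_pos {n : ℕ} {A : Matrix (Fin n) (Fin n) ℝ} (hA : A.PosDef) {v : Fin n → ℝ}
    (hv : v ≠ 0) : 0 < enrg A v := by
  have h := hA.dotProduct_mulVec_pos hv
  simp only [star_trivial] at h
  exact Real.sqrt_pos.mpr h

lemma exists_eucl_le_enrg {n : ℕ} {B : Matrix (Fin n) (Fin n) ℝ} (hB : B.PosDef) :
    ∃ c : ℝ, 0 < c ∧ ∀ v, eucl v ≤ c * enrg B v := by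
  set f : (Fin n → ℝ) →ₗ[ℝ] (Fin n → ℝ) := (CFC.sqrt B).mulVecLin with hf
  have hinj : Function.Injective f := by
    rw [← LinearMap.ker_eq_bot, LinearMap.ker_eq_bot']
    intro v hv
    by_contra hv0
    have := enrg_pos hB hv0
    rw [enrg_eq_eucl hB] at this
    have hz : CFC.sqrt B *ᵥ v = 0 := hv
    rw [hz] at this
    simp [eucl] at this
  have hsurj : Function.Surjective f := (LinearMap.injective_iff_surjective).mp hinj
  let e := LinearEquiv.ofBijective f ⟨hinj, hsurj⟩
  obtain ⟨C, hC0, hC⟩ := exists_lin_bound e.symm.toLinearMap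
  refine ⟨max C 1, lt_of_lt_of_le one_pos (le_max_right _ _), fun v => ?_⟩
  have h1 : e.symm (f v) = v := e.symm_apply_apply v
  calc eucl v = eucl (e.symm.toLinearMap (f v)) := by rw [LinearEquiv.coe_coe, h1]
    _ ≤ C * eucl (f v) := hC _
    _ ≤ max C 1 * enrg B v := by
        rw [enrg_eq_eucl hB]
        have : eucl (f v) = eucl (CFC.sqrt B *ᵥ v) := rfl
        rw [← this]
        exact mul_le_mul_of_nonneg_right (le_max_left _ _) (eucl_nonneg _)

lemma exists_unif_bound {m n : ℕ} {A : Matrix (Fin m) (Fin m) ℝ} (hA : A.PosDef)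
    {B : Matrix (Fin n) (Fin n) ℝ} (hB : B.PosDef) (S : Matrix (Fin m) (Fin n) ℝ) :
    ∃ K : ℝ, ∀ v, enrg A (S *ᵥ v) ≤ K * enrg B v := by
  obtain ⟨C1, hC10, hC1⟩ := exists_lin_bound (CFC.sqrt A * S).mulVecLin
  obtain ⟨c2, hc20, hc2⟩ := exists_eucl_le_enrg hB
  refine ⟨C1 * c2, fun v => ?_⟩
  have h1 : enrg A (S *ᵥ v) = eucl ((CFC.sqrt A * S).mulVecLin v) := by
    rw [enrg_eq_eucl hA, mulVecLin_apply, ← mulVec_mulVec]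
  rw [h1, mul_assoc]
  exact (hC1 v).trans (mul_le_mul_of_nonneg_left (hc2 v) hC10)

lemma opN_bddAbove {m n : ℕ} {A : Matrix (Fin m) (Fin m) ℝ} (hA : A.PosDef)
    {B : Matrix (Fin n) (Fin n) ℝ} (hB : B.PosDef) (S : Matrix (Fin m) (Fin n) ℝ) :
    BddAbove {c : ℝ | ∃ v : Fin n → ℝ, v ≠ 0 ∧ c = enrg A (S *ᵥ v) / enrg B v} := by
  obtain ⟨K, hK⟩ := exists_unif_bound hA hB S
  refine ⟨K, fun c hc => ?_⟩
  obtain ⟨v, hv, rfl⟩ := hc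
  rw [div_le_iff₀ (enrg_pos hB hv)]
  exact hK v

lemma enrg_mulVec_le {m n : ℕ} {A : Matrix (Fin m) (Fin m) ℝ} (hA : A.PosDef)
    {B : Matrix (Fin n) (Fin n) ℝ} (hB : B.PosDef) (S : Matrix (Fin m) (Fin n) ℝ)
    (v : Fin n → ℝ) : enrg A (S *ᵥ v) ≤ opN A B S * enrg B v := by
  by_cases hv : v = 0
  · subst hv; rw [mulVec_zero, enrg_zero, enrg_zero, mul_zero]
  · have hmem : enrg A (S *ᵥ v) / enrg B v ∈
        {c : ℝ | ∃ w : Fin n → ℝ, w ≠ 0 ∧ c = enrg A (S *ᵥ w) / enrg B w} := ⟨v, hv, rfl⟩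
    have hle : enrg A (S *ᵥ v) / enrg B v ≤ opN A B S :=
      le_csSup (opN_bddAbove hA hB S) hmem
    have hpos := enrg_pos hB hv
    calc enrg A (S *ᵥ v) = enrg A (S *ᵥ v) / enrg B v * enrg B v := by
          field_simp
      _ ≤ opN A B S * enrg B v := mul_le_mul_of_nonneg_right hle hpos.le

lemma opN_nonneg {m n : ℕ} {A : Matrix (Fin m) (Fin m) ℝ} (hA : A.PosDef)
    {B : Matrix (Fin n) (Fin n) ℝ} (hB : B.PosDef) (S : Matrix (Fin m) (Fin n) ℝ) :
    0 ≤ opN A B S := by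
  by_cases hne : ∃ v : Fin n → ℝ, v ≠ 0
  · obtain ⟨v, hv⟩ := hne
    have : (0:ℝ) ≤ enrg A (S *ᵥ v) / enrg B v :=
      div_nonneg (enrg_nonneg _ _) (enrg_nonneg _ _)
    exact this.trans (le_csSup (opN_bddAbove hA hB S) ⟨v, hv, rfl⟩)
  · have : {c : ℝ | ∃ v : Fin n → ℝ, v ≠ 0 ∧ c = enrg A (S *ᵥ v) / enrg B v} = ∅ := by
      ext c; simp only [Set.mem_setOf_eq, Set.mem_empty_iff_false, iff_false]
      rintro ⟨v, hv, -⟩; exact hne ⟨v, hv⟩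
    rw [opN, this, Real.sSup_empty]

lemma enrg_add_le {n : ℕ} {A : Matrix (Fin n) (Fin n) ℝ} (hA : A.PosDef) (u v : Fin n → ℝ) :
    enrg A (u + v) ≤ enrg A u + enrg A v := by
  simp only [enrg_eq_eucl hA, mulVec_add]
  exact eucl_add_le _ _

lemma enrg_sum_le {n : ℕ} {A : Matrix (Fin n) (Fin n) ℝ} (hA : A.PosDef) {ι : Type*}
    (s : Finset ι) (f : ι → Fin n → ℝ) :
    enrg A (∑ i ∈ s, f i) ≤ ∑ i ∈ s, enrg A (f i) := by
  simp only [enrg_eq_eucl hA]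
  rw [show CFC.sqrt A *ᵥ (∑ i ∈ s, f i) = ∑ i ∈ s, CFC.sqrt A *ᵥ f i by
    simp only [← mulVecLin_apply, map_sum]]
  exact eucl_sum_le _ _

lemma enrg_pow_le {n : ℕ} {A : Matrix (Fin n) (Fin n) ℝ} (hA : A.PosDef)
    (E : Matrix (Fin n) (Fin n) ℝ) (k : ℕ) (v : Fin n → ℝ) :
    enrg A ((E ^ k) *ᵥ v) ≤ (opN A A E) ^ k * enrg A v := by
  induction k with
  | zero => simp [one_mulVec]
  | succ k ih =>
    have h1 : (E ^ (k+1)) *ᵥ v = E *ᵥ ((E ^ k) *ᵥ v) := by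
      rw [mulVec_mulVec, ← pow_succ']
    rw [h1]
    calc enrg A (E *ᵥ ((E ^ k) *ᵥ v)) ≤ opN A A E * enrg A ((E ^ k) *ᵥ v) :=
          enrg_mulVec_le hA hA E _
      _ ≤ opN A A E * ((opN A A E) ^ k * enrg A v) :=
          mul_le_mul_of_nonneg_left ih (opN_nonneg hA hA E)
      _ = (opN A A E) ^ (k+1) * enrg A v := by ring

end AuxLemmas

/-- under absolute coarsest-level accuracy,
`‖x - x_in^{(n)}‖_A ≤ ‖x - x_ex^{(n)}‖_A + ε‖S‖_{A₀,A}/(1-‖E‖_A)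
  ≤ ‖E‖_A^n ‖x - x^{(0)}‖_A + ε‖S‖_{A₀,A}/(1-‖E‖_A)`. -/
theorem stmt12 {d d0 : ℕ} (A : Matrix (Fin d) (Fin d) ℝ) (hA : A.PosDef)
    (A0 : Matrix (Fin d0) (Fin d0) ℝ) (hA0 : A0.PosDef)
    (E : Matrix (Fin d) (Fin d) ℝ) (S : Matrix (Fin d) (Fin d0) ℝ)
    (hE : opN A A E < 1)
    (xsol : Fin d → ℝ) (xin xex : ℕ → Fin d → ℝ) (v0 v0in : ℕ → Fin d0 → ℝ)
    (ε : ℝ) (hε : 0 < ε) (n : ℕ)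
    (hin : ∀ k : ℕ,
      xsol - xin (k + 1) = E *ᵥ (xsol - xin k) + S *ᵥ (v0 (k + 1) - v0in (k + 1)))
    (hacc : ∀ k : ℕ, 1 ≤ k → k ≤ n → enrg A0 (v0 k - v0in k) ≤ ε)
    (h0 : xex 0 = xin 0)
    (hex : xsol - xex n = (E ^ n) *ᵥ (xsol - xex 0)) :
    enrg A (xsol - xin n) ≤
        enrg A (xsol - xex n) + ε * opN A A0 S / (1 - opN A A E) ∧
    enrg A (xsol - xex n) + ε * opN A A0 S / (1 - opN A A E) ≤
        (opN A A E) ^ n * enrg A (xsol - xin 0) + ε * opN A A0 S / (1 - opN A A E) := by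
  set q := opN A A E with hq
  set c := opN A A0 S with hc
  have hq0 : 0 ≤ q := opN_nonneg hA hA E
  have hc0 : 0 ≤ c := opN_nonneg hA hA0 S
  have hq1 : 0 < 1 - q := by linarith
  set w : ℕ → Fin d0 → ℝ := fun k => v0 k - v0in k with hw
  -- unrolled recursion
  have key : ∀ k : ℕ, xsol - xin k =
      (E ^ k) *ᵥ (xsol - xin 0) + ∑ i ∈ Finset.range k, (E ^ i) *ᵥ (S *ᵥ w (k - i)) := by
    intro k
    induction k with
    | zero => simp [one_mulVec]
    | succ k ih =>
      have hs1 : E *ᵥ ((E ^ k) *ᵥ (xsol - xin 0)) = (E ^ (k+1)) *ᵥ (xsol - xin 0) := by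
        rw [mulVec_mulVec, ← pow_succ']
      have hs2 : E *ᵥ (∑ i ∈ Finset.range k, (E ^ i) *ᵥ (S *ᵥ w (k - i)))
          = ∑ i ∈ Finset.range k, (E ^ (i+1)) *ᵥ (S *ᵥ w (k - i)) := by
        simp only [← mulVecLin_apply, map_sum]
        refine Finset.sum_congr rfl fun i _ => ?_
        simp only [mulVecLin_apply, mulVec_mulVec]
        rw [← Matrix.mul_assoc, ← pow_succ']
      rw [hin k, ih, mulVec_add, hs1, hs2]
      rw [Finset.sum_range_succ' (fun i => (E ^ i) *ᵥ (S *ᵥ w (k + 1 - i)))]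
      simp only [Nat.succ_sub_succ, pow_zero, one_mulVec, Nat.sub_zero]
      abel
  -- geometric sum bound
  have hgeom : ∑ i ∈ Finset.range n, q ^ i ≤ 1 / (1 - q) := by
    rw [le_div_iff₀ hq1]
    have := geom_sum_mul q n
    have hqn : 0 ≤ q ^ n := pow_nonneg hq0 n
    nlinarith [this]
  -- bound the sum term
  have hsum : ∑ i ∈ Finset.range n, enrg A ((E ^ i) *ᵥ (S *ᵥ w (n - i)))
      ≤ ε * c / (1 - q) := by
    have hterm : ∀ i ∈ Finset.range n,
        enrg A ((E ^ i) *ᵥ (S *ᵥ w (n - i))) ≤ q ^ i * (c * ε) := by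
      intro i hi
      rw [Finset.mem_range] at hi
      have h1 : enrg A ((E ^ i) *ᵥ (S *ᵥ w (n - i))) ≤ q ^ i * enrg A (S *ᵥ w (n - i)) :=
        enrg_pow_le hA E i _
      have h2 : enrg A (S *ᵥ w (n - i)) ≤ c * enrg A0 (w (n - i)) :=
        enrg_mulVec_le hA hA0 S _
      have h3 : enrg A0 (w (n - i)) ≤ ε := hacc (n - i) (by omega) (by omega)
      have h4 : enrg A (S *ᵥ w (n - i)) ≤ c * ε :=
        h2.trans (mul_le_mul_of_nonneg_left h3 hc0)
      exact h1.trans (mul_le_mul_of_nonneg_left h4 (pow_nonneg hq0 i))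
    calc ∑ i ∈ Finset.range n, enrg A ((E ^ i) *ᵥ (S *ᵥ w (n - i)))
        ≤ ∑ i ∈ Finset.range n, q ^ i * (c * ε) := Finset.sum_le_sum hterm
      _ = (∑ i ∈ Finset.range n, q ^ i) * (c * ε) := by rw [Finset.sum_mul]
      _ ≤ (1 / (1 - q)) * (c * ε) :=
          mul_le_mul_of_nonneg_right hgeom (by positivity)
      _ = ε * c / (1 - q) := by ring
  have hexeq : enrg A (xsol - xex n) = enrg A ((E ^ n) *ᵥ (xsol - xin 0)) := by
    rw [hex, h0]
  constructor
  · calc enrg A (xsol - xin n)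
        = enrg A ((E ^ n) *ᵥ (xsol - xin 0)
            + ∑ i ∈ Finset.range n, (E ^ i) *ᵥ (S *ᵥ w (n - i))) := by rw [← key n]
      _ ≤ enrg A ((E ^ n) *ᵥ (xsol - xin 0))
            + enrg A (∑ i ∈ Finset.range n, (E ^ i) *ᵥ (S *ᵥ w (n - i))) :=
          enrg_add_le hA _ _
      _ ≤ enrg A ((E ^ n) *ᵥ (xsol - xin 0))
            + ∑ i ∈ Finset.range n, enrg A ((E ^ i) *ᵥ (S *ᵥ w (n - i))) := by
          linarith [enrg_sum_le hA (Finset.range n)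
            (fun i => (E ^ i) *ᵥ (S *ᵥ w (n - i)))]
      _ ≤ enrg A (xsol - xex n) + ε * c / (1 - q) := by
          rw [hexeq]; linarith
  · have := enrg_pow_le hA E n (xsol - xin 0)
    rw [hexeq]
    linarith
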